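/- arXiv:2601.18524 — 4 statements merged into one kernel-verified Lean document; each statement's English description precedes it below -/
import Mathlib

section
/- If x₁ ≤ x₂ and y₁ ≤ y₂, then for any monotonically increasing convex function f : ℝ → ℝ, we have f(|x₁ - y₁|) + f(|x₂ - y₂|) ≤ f(|x₁ - y₂|) + f(|x₂ - y₁|). -/
lemma conv4 (f : ℝ → ℝ) (hconv : ConvexOn ℝ Set.univ f)
    (a b c d : ℝ) (hab : a ≤ b) (hbc : b ≤ c) (hcd : c ≤ d)
    (hsum : a + d = b + c) : f b + f c ≤ f a + f d := by
  rcases eq_or_lt_of_le (hab.trans (hbc.trans hcd)) with h | h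
  · have hb : b = a := le_antisymm (by linarith) hab
    have hc : c = a := le_antisymm (by linarith) (hab.trans hbc)
    have hd : d = a := h.symm
    simp [hb, hc, hd]
  · set t : ℝ := (d - b) / (d - a) with ht
    have hda : (0:ℝ) < d - a := by linarith
    have ht0 : 0 ≤ t := div_nonneg (by linarith) hda.le
    have ht1 : t ≤ 1 := (div_le_one hda).mpr (by linarith)
    have h1 : f (t * a + (1 - t) * d) ≤ t * f a + (1 - t) * f d :=
      hconv.2 (Set.mem_univ a) (Set.mem_univ d) ht0 (by linarith) (by ring)
    have h2 : f ((1 - t) * a + t * d) ≤ (1 - t) * f a + t * f d :=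
      hconv.2 (Set.mem_univ a) (Set.mem_univ d) (by linarith) ht0 (by ring)
    have htd : t * (d - a) = d - b := by rw [ht]; field_simp
    have hb' : t * a + (1 - t) * d = b := by linear_combination -htd
    have hc' : (1 - t) * a + t * d = c := by linear_combination htd + hsum
    rw [hb'] at h1; rw [hc'] at h2
    linarith

lemma key (f : ℝ → ℝ) (hmono : Monotone f) (hconv : ConvexOn ℝ Set.univ f)
    (a b c d : ℝ) (hab : a ≤ b) (hcd : c ≤ d) (hbd : b ≤ d)
    (hsum : a + b ≤ c + d) : f a + f b ≤ f c + f d := by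
  rcases le_total a c with h | h
  · exact add_le_add (hmono h) (hmono hbd)
  · have h1 : f a + f b ≤ f c + f (a + b - c) :=
      conv4 f hconv c a b (a + b - c) h (by linarith) (by linarith) (by ring)
    have h2 : f (a + b - c) ≤ f d := hmono (by linarith)
    linarith

theorem exchange_lemma (f : ℝ → ℝ) (hmono : Monotone f)
    (hconv : ConvexOn ℝ Set.univ f)
    (x₁ x₂ y₁ y₂ : ℝ) (hx : x₁ ≤ x₂) (hy : y₁ ≤ y₂) :
    f |x₁ - y₁| + f |x₂ - y₂| ≤ f |x₁ - y₂| + f |x₂ - y₁| := by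
  have hsum : |x₁ - y₁| + |x₂ - y₂| ≤ |x₁ - y₂| + |x₂ - y₁| := by
    rcases abs_cases (x₁ - y₁) with ⟨h1, _⟩ | ⟨h1, _⟩ <;>
    rcases abs_cases (x₂ - y₂) with ⟨h2, _⟩ | ⟨h2, _⟩ <;>
    rcases abs_cases (x₁ - y₂) with ⟨h3, _⟩ | ⟨h3, _⟩ <;>
    rcases abs_cases (x₂ - y₁) with ⟨h4, _⟩ | ⟨h4, _⟩ <;>
    linarith
  have hA : x₂ - y₁ ≤ max |x₁ - y₂| |x₂ - y₁| := le_max_of_le_right (le_abs_self _)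
  have hB : y₂ - x₁ ≤ max |x₁ - y₂| |x₂ - y₁| := le_max_of_le_left (by rw [abs_sub_comm]; exact le_abs_self _)
  have hmax : max |x₁ - y₁| |x₂ - y₂| ≤ max |x₁ - y₂| |x₂ - y₁| := by
    apply max_le
    · rcases abs_cases (x₁ - y₁) with ⟨h1, _⟩ | ⟨h1, _⟩ <;> linarith
    · rcases abs_cases (x₂ - y₂) with ⟨h2, _⟩ | ⟨h2, _⟩ <;> linarith
  rcases le_total |x₁ - y₁| |x₂ - y₂| with h | h <;>
  rcases le_total |x₁ - y₂| |x₂ - y₁| with h' | h'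
  · have := key f hmono hconv |x₁ - y₁| |x₂ - y₂| |x₁ - y₂| |x₂ - y₁| h h'
      (by rw [max_eq_right h, max_eq_right h'] at hmax; exact hmax) hsum
    linarith
  · have := key f hmono hconv |x₁ - y₁| |x₂ - y₂| |x₂ - y₁| |x₁ - y₂| h h'
      (by rw [max_eq_right h, max_eq_left h'] at hmax; exact hmax) (by linarith)
    linarith
  · have := key f hmono hconv |x₂ - y₂| |x₁ - y₁| |x₁ - y₂| |x₂ - y₁| h h'
      (by rw [max_eq_left h, max_eq_right h'] at hmax; exact hmax) (by linarith)
    linarith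
  · have := key f hmono hconv |x₂ - y₂| |x₁ - y₁| |x₂ - y₁| |x₁ - y₂| h h'
      (by rw [max_eq_left h, max_eq_left h'] at hmax; exact hmax) (by linarith)
    linarith
end

section
/- Let n be a natural number, let a : Fin n → ℝ and b : Fin n → ℝ with b monotone (b i ≤ b j whenever i ≤ j), and let f : ℝ → ℝ be monotone increasing and convex. Let σ* be a permutation of Fin n such that a ∘ σ* is monotone (i.e., σ* sorts a). Then for every permutation σ of Fin n, ∑ i, f(|a(σ*(i)) - b(i)|) ≤ ∑ i, f(|a(σ(i)) - b(i)|). -/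
/-!
Since `f` is monotone and convex, `g x = f |x|` is convex on `ℝ`. After relabelling `a` in
sorted order, the cost `c j i = g (a j - b i)` of matching `a j` with `b i` is then a Monge array:
`c j k + c j' l ≤ c j l + c j' k` for `j ≤ j'` and `k ≤ l`, because the two arguments of `g` on
the left lie between the two on the right and have the same sum. For a Monge array the identity
is an optimal assignment: if `m` is the largest point moved by a permutation `σ`, composing `σ`
with the transposition of `m` and `σ m` fixes `m`, shrinks the support, and does not increase
the cost.
-/

open Equiv Finset Set

lemma ConvexOn.sub_mul_le_of_mem_Icc {s : Set ℝ} {g : ℝ → ℝ} (hg : ConvexOn ℝ s g)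
    {r x t : ℝ} (hr : r ∈ s) (ht : t ∈ s) (hx : x ∈ Icc r t) :
    (t - r) * g x ≤ (t - x) * g r + (x - r) * g t := by
  obtain ⟨hrx, hxt⟩ := hx
  rcases hrx.eq_or_lt with rfl | hrx
  · linarith
  rcases hxt.eq_or_lt with rfl | hxt
  · linarith
  exact hg.secant_mono_aux1 hr ht hrx hxt

lemma ConvexOn.add_le_add_of_add_eq {s : Set ℝ} {g : ℝ → ℝ} (hg : ConvexOn ℝ s g)
    {r p q t : ℝ} (hr : r ∈ s) (ht : t ∈ s) (hrp : r ≤ p) (hpt : p ≤ t)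
    (hsum : p + q = r + t) : g p + g q ≤ g r + g t := by
  rcases (hrp.trans hpt).eq_or_lt with rfl | hrt
  · obtain rfl : p = r := le_antisymm hpt hrp
    obtain rfl : q = p := by linarith
    rfl
  have hp := hg.sub_mul_le_of_mem_Icc hr ht ⟨hrp, hpt⟩
  have hq := hg.sub_mul_le_of_mem_Icc hr ht (⟨by linarith, by linarith⟩ : q ∈ Icc r t)
  refine le_of_mul_le_mul_left ?_ (sub_pos.2 hrt)
  linear_combination hp + hq + (g t - g r) * hsum

lemma ConvexOn.comp_sub_add_comp_sub_le {g : ℝ → ℝ} (hg : ConvexOn ℝ univ g)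
    {x y u v : ℝ} (hxy : x ≤ y) (huv : u ≤ v) :
    g (x - u) + g (y - v) ≤ g (x - v) + g (y - u) :=
  hg.add_le_add_of_add_eq (mem_univ _) (mem_univ _) (by linarith) (by linarith) (by ring)

lemma ConvexOn.comp_abs {f : ℝ → ℝ} (hf : ConvexOn ℝ univ f) (hmono : Monotone f) :
    ConvexOn ℝ univ (fun x => f |x|) := by
  refine ⟨convex_univ, fun x _ y _ α β hα hβ hαβ => ?_⟩
  calc f |α • x + β • y| ≤ f (α • |x| + β • |y|) := by
        refine hmono ((abs_add_le _ _).trans_eq ?_)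
        simp [abs_mul, abs_of_nonneg hα, abs_of_nonneg hβ]
    _ ≤ α • f |x| + β • f |y| := hf.2 trivial trivial hα hβ hαβ

def IsMonge {ι M : Type*} [Preorder ι] [Add M] [LE M] (c : ι → ι → M) : Prop :=
  ∀ ⦃i j k l⦄, i ≤ j → k ≤ l → c i k + c j l ≤ c i l + c j k

namespace IsMonge

variable {ι M : Type*} [LinearOrder ι] [Fintype ι]
  [AddCommGroup M] [PartialOrder M] [IsOrderedAddMonoid M] {c : ι → ι → M}

lemma sum_apply_swap_mul_le (hc : IsMonge c) {σ : Perm ι} {m : ι} (hm : σ m ≠ m)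
    (hσm : σ m ≤ m) (hσm' : σ⁻¹ m ≤ m) :
    ∑ i, c ((swap m (σ m) * σ) i) i ≤ ∑ i, c (σ i) i := by
  set k := σ⁻¹ m
  have hσk : σ k = m := by simp [k]
  have hkm : m ≠ k := fun h => hm (by rw [h, hσk, ← h])
  rw [← sub_nonneg, ← sum_sub_distrib, Fintype.sum_eq_add m k hkm]
  · simp only [Perm.mul_apply, swap_apply_right, hσk, swap_apply_left]
    calc (0 : M) ≤ c (σ m) m + c m k - (c (σ m) k + c m m) := sub_nonneg.2 (hc hσm hσm')
      _ = _ := by abel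
  · rintro i ⟨him, hik⟩
    have : σ i ≠ m := fun h => hik (σ.eq_inv_iff_eq.2 h)
    rw [Perm.mul_apply, swap_apply_of_ne_of_ne this (σ.injective.ne him), sub_self]

theorem sum_apply_self_le_sum_apply_perm (hc : IsMonge c) (σ : Perm ι) :
    ∑ i, c i i ≤ ∑ i, c (σ i) i := by
  classical
  induction hn : #σ.support using Nat.strong_induction_on generalizing σ with
  | _ n ih =>
  rcases σ.support.eq_empty_or_nonempty with hempty | hne
  · simp [Perm.support_eq_empty_iff.1 hempty]
  set m := σ.support.max' hne
  have hm : σ m ≠ m := Perm.mem_support.1 (max'_mem _ _)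
  have hσm : σ m ≤ m := le_max' _ _ (Perm.apply_mem_support.2 (max'_mem _ _))
  have hσm' : σ⁻¹ m ≤ m :=
    le_max' _ _ (Perm.apply_mem_support.1 (by simpa using max'_mem σ.support hne))
  calc ∑ i, c i i ≤ ∑ i, c ((swap m (σ m) * σ) i) i :=
        ih _ (hn ▸ Perm.card_support_swap_mul hm) _ rfl
    _ ≤ ∑ i, c (σ i) i := hc.sum_apply_swap_mul_le hm hσm hσm'

end IsMonge

theorem sorted_matching_optimal {n : ℕ} (a b : Fin n → ℝ) (hb : Monotone b)
    (f : ℝ → ℝ) (hmono : Monotone f) (hconv : ConvexOn ℝ Set.univ f)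
    (σstar : Equiv.Perm (Fin n)) (hsort : Monotone (a ∘ σstar)) :
    ∀ σ : Equiv.Perm (Fin n),
      ∑ i, f |a (σstar i) - b i| ≤ ∑ i, f |a (σ i) - b i| := by
  intro σ
  have hc : IsMonge fun j i => f |a (σstar j) - b i| := fun _ _ _ _ hij hkl =>
    (hconv.comp_abs hmono).comp_sub_add_comp_sub_le (hsort hij) (hb hkl)
  simpa using hc.sum_apply_self_le_sum_apply_perm (σstar⁻¹ * σ)
end

section
/- Let f : ℝ → ℝ be monotone increasing and convex, n a natural number, and a b : Fin n → ℝ both monotone increasing. Suppose σ is a permutation of Fin n with σ ≠ id such that there exist indices i < j with σ(i) > σ(j). Define σ' = σ composed with the transposition of i and j (so σ'(i) = σ(j), σ'(j) = σ(i), and σ'(k) = σ(k) otherwise). Then ∑ k, f(|a(σ'(k)) - b(k)|) ≤ ∑ k, f(|a(σ(k)) - b(k)|). -/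
/-!
Swapping the targets of `i < j` changes only the two terms at `i` and `j`, so it suffices that
`φ = f ∘ |·|`, which is convex because `f` is monotone and convex, satisfies the Monge inequality
`φ (v - q) + φ (u - p) ≤ φ (v - p) + φ (u - q)` for `u ≤ v`, `p ≤ q`. That inequality says the
increments of a convex function over intervals of a fixed length `q - p` grow with the left endpoint.
-/

open Set

theorem ConvexOn.map_add_sub_map_le_map_add_sub_map {𝕜 : Type*} [Field 𝕜] [LinearOrder 𝕜]
    [IsStrictOrderedRing 𝕜] {s : Set 𝕜} {φ : 𝕜 → 𝕜} (hφ : ConvexOn 𝕜 s φ) {x y h : 𝕜}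
    (hx : x ∈ s) (hyh : y + h ∈ s) (hxy : x ≤ y) (hh : 0 ≤ h) :
    φ (x + h) - φ x ≤ φ (y + h) - φ y := by
  rcases hh.eq_or_lt with rfl | hh
  · simp
  have mem : ∀ z ∈ Icc x (y + h), z ∈ s := fun z hz => hφ.1.ordConnected.out hx hyh hz
  have hxh := mem (x + h) ⟨by linarith, by linarith⟩
  have hy := mem y ⟨hxy, by linarith⟩
  rw [← div_le_div_iff_of_pos_right hh]
  calc (φ (x + h) - φ x) / h = (φ (x + h) - φ x) / (x + h - x) := by ring_nf
    _ ≤ (φ (y + h) - φ x) / (y + h - x) :=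
      hφ.secant_mono hx hxh hyh (by linarith) (by linarith) (by linarith)
    _ = (φ x - φ (y + h)) / (x - (y + h)) := by rw [← neg_div_neg_eq]; ring_nf
    _ ≤ (φ y - φ (y + h)) / (y - (y + h)) :=
      hφ.secant_mono hyh hx hy (by linarith) (by linarith) hxy
    _ = (φ (y + h) - φ y) / h := by rw [← neg_div_neg_eq]; ring_nf

theorem ConvexOn.map_sub_add_map_sub_le {𝕜 : Type*} [Field 𝕜] [LinearOrder 𝕜]
    [IsStrictOrderedRing 𝕜] {φ : 𝕜 → 𝕜} (hφ : ConvexOn 𝕜 univ φ) {u v p q : 𝕜}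
    (huv : u ≤ v) (hpq : p ≤ q) :
    φ (v - q) + φ (u - p) ≤ φ (v - p) + φ (u - q) := by
  have h := hφ.map_add_sub_map_le_map_add_sub_map (mem_univ (u - q)) (mem_univ (v - q + (q - p)))
    (sub_le_sub_right huv q) (sub_nonneg.2 hpq)
  rw [sub_add_sub_cancel, sub_add_sub_cancel] at h
  linarith

theorem ConvexOn.comp_norm {E : Type*} [SeminormedAddCommGroup E] [NormedSpace ℝ E] {f : ℝ → ℝ}
    (hf : ConvexOn ℝ (Ici 0) f) (hf' : MonotoneOn f (Ici 0)) :
    ConvexOn ℝ univ (fun x : E => f ‖x‖) := by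
  refine ⟨convex_univ, fun x _ y _ a b ha hb hab => ?_⟩
  calc f ‖a • x + b • y‖ ≤ f (a * ‖x‖ + b * ‖y‖) := by
        refine hf' (norm_nonneg _) (mem_Ici.2 (by positivity)) ?_
        simpa [norm_smul, abs_of_nonneg ha, abs_of_nonneg hb] using norm_add_le (a • x) (b • y)
    _ ≤ a • f ‖x‖ + b • f ‖y‖ := hf.2 (norm_nonneg x) (norm_nonneg y) ha hb hab

theorem Equiv.Perm.sum_mul_swap_sub_sum {ι M : Type*} [Fintype ι] [DecidableEq ι] [AddCommGroup M]
    (F : ι → ι → M) (σ : Equiv.Perm ι) (i j : ι) :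
    ∑ k, F ((σ * Equiv.swap i j) k) k - ∑ k, F (σ k) k =
      F (σ j) i + F (σ i) j - (F (σ i) i + F (σ j) j) := by
  rcases eq_or_ne i j with rfl | hij
  · simp
  rw [← Finset.sum_sub_distrib, Fintype.sum_eq_add i j hij]
  · simp only [Equiv.Perm.mul_apply, Equiv.swap_apply_left, Equiv.swap_apply_right]
    abel
  · rintro k ⟨hki, hkj⟩
    simp [Equiv.swap_apply_of_ne_of_ne hki hkj]

theorem uncross_swap_step_general {n : ℕ} (f : ℝ → ℝ) (hmono : Monotone f)
    (hconv : ConvexOn ℝ Set.univ f)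
    (a b : Fin n → ℝ) (ha : Monotone a) (hb : Monotone b)
    (σ : Equiv.Perm (Fin n))
    (i j : Fin n) (hij : i < j) (hinv : σ j < σ i) :
    ∑ k, f |a ((σ * Equiv.swap i j) k) - b k| ≤ ∑ k, f |a (σ k) - b k| := by
  have hφ : ConvexOn ℝ univ (fun x : ℝ => f ‖x‖) :=
    (hconv.subset (subset_univ _) (convex_Ici 0)).comp_norm (hmono.monotoneOn _)
  have monge := hφ.map_sub_add_map_sub_le (ha hinv.le) (hb hij.le)
  have swap := Equiv.Perm.sum_mul_swap_sub_sum (fun m k => f |a m - b k|) σ i j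
  simp only [Real.norm_eq_abs] at monge
  linarith

theorem uncross_swap_step {n : ℕ} (f : ℝ → ℝ) (hmono : Monotone f)
    (hconv : ConvexOn ℝ Set.univ f)
    (a b : Fin n → ℝ) (ha : Monotone a) (hb : Monotone b)
    (σ : Equiv.Perm (Fin n)) (hσ : σ ≠ 1)
    (i j : Fin n) (hij : i < j) (hinv : σ j < σ i) :
    ∑ k, f |a ((σ * Equiv.swap i j) k) - b k| ≤ ∑ k, f |a (σ k) - b k| :=
  uncross_swap_step_general f hmono hconv a b ha hb σ i j hij hinv
end

section
/- For a, b : Fin n → ℝ both monotone increasing and any permutation σ of Fin n, the maximum matched deviation satisfies max over i of |a(i) - b(i)| ≤ max over i of |a(σ(i)) - b(i)|. -/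
lemma perm_exists_le_ge {n : ℕ} (σ : Equiv.Perm (Fin n)) (i : Fin n) :
    ∃ j, j ≤ i ∧ i ≤ σ j := by
  by_contra h
  push_neg at h
  have hmap : ∀ j ∈ Finset.Iic i, σ j ∈ Finset.Iio i := by
    intro j hj
    exact Finset.mem_Iio.mpr (h j (Finset.mem_Iic.mp hj))
  have hcard := Finset.card_le_card_of_injOn σ hmap (σ.injective.injOn)
  rw [Fin.card_Iic, Fin.card_Iio] at hcard
  omega

lemma perm_exists_ge_le {n : ℕ} (σ : Equiv.Perm (Fin n)) (i : Fin n) :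
    ∃ j, i ≤ j ∧ σ j ≤ i := by
  obtain ⟨j, hj1, hj2⟩ := perm_exists_le_ge σ⁻¹ i
  exact ⟨σ⁻¹ j, hj2, by simpa using hj1⟩

theorem sorted_matching_linf {n : ℕ} (hn : 0 < n) (a b : Fin n → ℝ)
    (ha : Monotone a) (hb : Monotone b) (σ : Equiv.Perm (Fin n)) :
    Finset.univ.sup' (Finset.univ_nonempty_iff.mpr ⟨⟨0, hn⟩⟩)
        (fun i => |a i - b i|)
      ≤ Finset.univ.sup' (Finset.univ_nonempty_iff.mpr ⟨⟨0, hn⟩⟩)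
        (fun i => |a (σ i) - b i|) := by
  apply Finset.sup'_le
  intro i _
  rcases le_total (a i) (b i) with hab | hab
  · obtain ⟨j, hij, hji⟩ := perm_exists_ge_le σ i
    have h1 : a (σ j) ≤ a i := ha hji
    have h2 : b i ≤ b j := hb hij
    calc |a i - b i| ≤ |a (σ j) - b j| := by
          rw [abs_sub_comm, abs_of_nonneg (by linarith), abs_sub_comm,
            abs_of_nonneg (by linarith)]
          linarith
      _ ≤ _ := Finset.le_sup' (fun i => |a (σ i) - b i|) (Finset.mem_univ j)
  · obtain ⟨j, hij, hji⟩ := perm_exists_le_ge σ i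
    have h1 : a i ≤ a (σ j) := ha hji
    have h2 : b j ≤ b i := hb hij
    calc |a i - b i| ≤ |a (σ j) - b j| := by
          rw [abs_of_nonneg (by linarith), abs_of_nonneg (by linarith)]
          linarith
      _ ≤ _ := Finset.le_sup' (fun i => |a (σ i) - b i|) (Finset.mem_univ j)
end
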